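/- Let X = (X₁,...,X_N) be continuous random variables with joint density p, marginal densities p_i, marginal CDFs F_i, and copula density c on [0,1]^N defined by p(x) = c(F₁(x₁),...,F_N(x_N))·∏ᵢ pᵢ(xᵢ). Then the mutual information I(X) = ∫ p(x) log( p(x) / ∏ᵢ pᵢ(xᵢ) ) dx equals the negative copula entropy: I(X) = -H_c(X), where H_c(X) = -∫_{[0,1]^N} c(u) log c(u) du. -/

import Mathlib

/-!
The map `T x = (F₁ x₁, …, F_N x_N)` is the probability integral transform in each coordinate: each
`Fᵢ` is a continuous, strictly increasing bijection of `ℝ` onto `(0, 1)` pushing `pᵢ(t) dt` to the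
uniform law, so `T` pushes the product measure `∏ᵢ pᵢ(xᵢ) dx` to Lebesgue measure on `(0, 1)ᴺ`.
By the copula factorization, `p log (p / ∏ᵢ pᵢ) = (∏ᵢ pᵢ) · (c log c) ∘ T`, so the mutual
information is `∫ (c log c) ∘ T d(∏ᵢ pᵢ dx) = ∫_{[0,1]ᴺ} c log c`.
-/

open MeasureTheory ProbabilityTheory Set
open scoped ENNReal

namespace MeasureTheory

theorem lintegral_fin_nat_prod_eq_prod {n : ℕ} {E : Type*} [MeasurableSpace E]
    {μ : Fin n → Measure E} [∀ i, SigmaFinite (μ i)] {f : Fin n → E → ℝ≥0∞}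
    (hf : ∀ i, AEMeasurable (f i) (μ i)) :
    ∫⁻ x, ∏ i, f i (x i) ∂Measure.pi μ = ∏ i, ∫⁻ x, f i x ∂μ i := by
  induction n with
  | zero => simp
  | succ n ih =>
      calc
        _ = ∫⁻ x : E × (Fin n → E),
            f 0 x.1 * ∏ i : Fin n, f i.succ (x.2 i) ∂(μ 0).prod (Measure.pi fun i ↦ μ i.succ) := by
          rw [← (measurePreserving_piFinSuccAbove μ 0).symm.lintegral_comp_emb
            (MeasurableEquiv.measurableEmbedding _)]
          simp_rw [MeasurableEquiv.piFinSuccAbove_symm_apply, Fin.insertNthEquiv,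
            Fin.prod_univ_succ, Fin.insertNth_zero, Equiv.coe_fn_mk, Fin.cons_succ,
            Fin.zero_succAbove, cast_eq, Fin.cons_zero]
        _ = (∫⁻ x, f 0 x ∂μ 0) * ∏ i : Fin n, ∫⁻ x, f i.succ x ∂μ i.succ := by
          rw [lintegral_prod_mul (g := fun y : Fin n → E ↦ ∏ i : Fin n, f i.succ (y i)) (hf 0),
            ih fun i ↦ hf i.succ]
          exact Finset.aemeasurable_fun_prod _ fun (i : Fin n) _ ↦
            (hf i.succ).comp_quasiMeasurePreserving (Measure.quasiMeasurePreserving_eval _ i)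
        _ = ∏ i, ∫⁻ x, f i x ∂μ i := (Fin.prod_univ_succ fun i ↦ ∫⁻ x, f i x ∂μ i).symm

theorem lintegral_fintype_prod_eq_prod {ι E : Type*} [Fintype ι] [MeasurableSpace E]
    {μ : ι → Measure E} [∀ i, SigmaFinite (μ i)] {f : ι → E → ℝ≥0∞}
    (hf : ∀ i, AEMeasurable (f i) (μ i)) :
    ∫⁻ x, ∏ i, f i (x i) ∂Measure.pi μ = ∏ i, ∫⁻ x, f i x ∂μ i := by
  let e := (Fintype.equivFin ι).symm
  rw [← (measurePreserving_piCongrLeft _ e).lintegral_comp_emb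
    (MeasurableEquiv.measurableEmbedding _)]
  simp_rw [← e.prod_comp, MeasurableEquiv.coe_piCongrLeft, Equiv.piCongrLeft_apply_apply]
  exact lintegral_fin_nat_prod_eq_prod fun i ↦ hf (e i)

theorem Measure.pi_withDensity {ι E : Type*} [Fintype ι] [MeasurableSpace E]
    {μ : ι → Measure E} [∀ i, SigmaFinite (μ i)] {f : ι → E → ℝ≥0∞}
    (hf : ∀ i, AEMeasurable (f i) (μ i)) [∀ i, SigmaFinite ((μ i).withDensity (f i))] :
    Measure.pi (fun i ↦ (μ i).withDensity (f i)) =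
      (Measure.pi μ).withDensity fun x ↦ ∏ i, f i (x i) := by
  refine Measure.pi_eq fun s hs ↦ ?_
  rw [withDensity_apply _ (.univ_pi hs), Measure.restrict_pi_pi,
    lintegral_fintype_prod_eq_prod fun i ↦ (hf i).restrict]
  exact Finset.prod_congr rfl fun i _ ↦ (withDensity_apply _ (hs i)).symm

theorem withDensity_ofReal_apply_eq_ofReal_setIntegral {α : Type*} [MeasurableSpace α]
    {μ : Measure α} {f : α → ℝ} {s : Set α} (hs : MeasurableSet s) (hf : IntegrableOn f s μ)
    (hf_nonneg : 0 ≤ᵐ[μ.restrict s] f) :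
    μ.withDensity (fun x ↦ ENNReal.ofReal (f x)) s = ENNReal.ofReal (∫ x in s, f x ∂μ) := by
  rw [withDensity_apply _ hs, ofReal_integral_eq_lintegral_ofReal hf hf_nonneg]

theorem isProbabilityMeasure_withDensity_ofReal {α : Type*} [MeasurableSpace α]
    {μ : Measure α} {f : α → ℝ} (hf : Integrable f μ) (hf_nonneg : 0 ≤ᵐ[μ] f)
    (hf_one : ∫ x, f x ∂μ = 1) :
    IsProbabilityMeasure (μ.withDensity fun x ↦ ENNReal.ofReal (f x)) :=
  ⟨by rw [withDensity_ofReal_apply_eq_ofReal_setIntegral .univ hf.integrableOn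
    (by rwa [Measure.restrict_univ]), setIntegral_univ, hf_one, ENNReal.ofReal_one]⟩

theorem continuous_setIntegral_Iic {f : ℝ → ℝ} (hf : Integrable f) :
    Continuous fun t ↦ ∫ s in Iic t, f s := by
  have hsplit : (fun t ↦ ∫ s in Iic t, f s) = fun t ↦ (∫ s in Iic 0, f s) + ∫ s in 0..t, f s := by
    funext t
    rw [← intervalIntegral.integral_Iic_sub_Iic hf.integrableOn hf.integrableOn]
    ring
  rw [hsplit]
  exact continuous_const.add
    (intervalIntegral.continuous_primitive (fun _ _ ↦ hf.intervalIntegrable) 0)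

theorem strictMono_setIntegral_Iic {f : ℝ → ℝ} (hf : Integrable f) (hf_pos : ∀ t, 0 < f t) :
    StrictMono fun t ↦ ∫ s in Iic t, f s := by
  intro a b hab
  have hdiff := intervalIntegral.integral_Iic_sub_Iic hf.integrableOn hf.integrableOn
    (a := a) (b := b)
  have hpos := intervalIntegral.intervalIntegral_pos_of_pos_on hf.intervalIntegrable
    (fun x _ ↦ hf_pos x) hab
  linarith

end MeasureTheory

namespace ProbabilityTheory

theorem map_cdf_eq_volume_restrict_Ioo (μ : Measure ℝ) [IsProbabilityMeasure μ]
    (hmono : StrictMono (cdf μ)) (hcont : Continuous (cdf μ)) :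
    μ.map (cdf μ) = volume.restrict (Ioo 0 1) := by
  have hpos : ∀ t, 0 < cdf μ t := fun t ↦ (cdf_nonneg μ (t - 1)).trans_lt (hmono (by linarith))
  have hlt : ∀ t, cdf μ t < 1 := fun t ↦ (hmono (lt_add_one t)).trans_le (cdf_le_one μ _)
  have : IsProbabilityMeasure (μ.map (cdf μ)) :=
    Measure.isProbabilityMeasure_map (cdf μ).mono.measurable.aemeasurable
  refine Measure.ext_of_Iic _ _ fun y ↦ ?_
  rw [Measure.map_apply (cdf μ).mono.measurable measurableSet_Iic,
    Measure.restrict_apply measurableSet_Iic]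
  rcases le_or_gt y 0 with hy0 | hy0
  · have hpre : cdf μ ⁻¹' Iic y = ∅ :=
      eq_empty_of_forall_notMem fun t ht ↦ (hpos t).not_ge (le_trans ht hy0)
    have hI : Iic y ∩ Ioo 0 1 = ∅ := by grind
    simp [hpre, hI]
  rcases lt_or_ge y 1 with hy1 | hy1
  · obtain ⟨t, ht⟩ : y ∈ range (cdf μ) := by
      obtain ⟨t₀, ht₀⟩ := ((tendsto_cdf_atBot μ).eventually_lt_const hy0).exists
      obtain ⟨t₁, ht₁⟩ := ((tendsto_cdf_atTop μ).eventually_const_lt hy1).exists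
      exact intermediate_value_univ t₀ t₁ hcont ⟨ht₀.le, ht₁.le⟩
    have hpre : cdf μ ⁻¹' Iic y = Iic t := by
      ext s; simp [← ht, hmono.le_iff_le]
    have hI : Iic y ∩ Ioo 0 1 = Ioc 0 y := by grind
    rw [hpre, ← ofReal_cdf, ht, hI, Real.volume_Ioc, sub_zero]
  · have hpre : cdf μ ⁻¹' Iic y = univ :=
      eq_univ_of_forall fun t ↦ (hlt t).le.trans hy1
    have hI : Iic y ∩ Ioo 0 1 = Ioo 0 1 := by grind
    rw [hpre, hI, measure_univ, Real.volume_Ioo, sub_zero, ENNReal.ofReal_one]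

theorem cdf_withDensity_ofReal {f : ℝ → ℝ} (hf : Integrable f) (hf_nonneg : 0 ≤ f)
    (hf_one : ∫ t, f t = 1) :
    ⇑(cdf (volume.withDensity fun t ↦ ENNReal.ofReal (f t))) = fun t ↦ ∫ s in Iic t, f s := by
  have := isProbabilityMeasure_withDensity_ofReal hf (.of_forall hf_nonneg) hf_one
  funext t
  rw [cdf_eq_real, measureReal_def, withDensity_ofReal_apply_eq_ofReal_setIntegral
    measurableSet_Iic hf.integrableOn (.of_forall hf_nonneg),
    ENNReal.toReal_ofReal (setIntegral_nonneg measurableSet_Iic fun x _ ↦ hf_nonneg x)]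

theorem map_setIntegral_Iic_withDensity_ofReal {f : ℝ → ℝ} (hf : Integrable f)
    (hf_pos : ∀ t, 0 < f t) (hf_one : ∫ t, f t = 1) :
    (volume.withDensity fun t ↦ ENNReal.ofReal (f t)).map (fun t ↦ ∫ s in Iic t, f s) =
      volume.restrict (Ioo 0 1) := by
  have hcdf := cdf_withDensity_ofReal hf (fun t ↦ (hf_pos t).le) hf_one
  have := isProbabilityMeasure_withDensity_ofReal hf (.of_forall fun t ↦ (hf_pos t).le) hf_one
  rw [← hcdf]
  exact map_cdf_eq_volume_restrict_Ioo _ (hcdf ▸ strictMono_setIntegral_Iic hf hf_pos)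
    (hcdf ▸ continuous_setIntegral_Iic hf)

section Product

variable {ι : Type*} [Fintype ι] {f : ι → ℝ → ℝ}

theorem map_pi_setIntegral_Iic_withDensity_ofReal (hf : ∀ i, Integrable (f i))
    (hf_pos : ∀ i t, 0 < f i t) (hf_one : ∀ i, ∫ t, f i t = 1) :
    (Measure.pi fun i ↦ volume.withDensity fun t ↦ ENNReal.ofReal (f i t)).map
        (fun x i ↦ ∫ s in Iic (x i), f i s) =
      volume.restrict (univ.pi fun _ ↦ Ioo 0 1) := by
  have hmap : ∀ i, (volume.withDensity fun t ↦ ENNReal.ofReal (f i t)).map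
      (fun t ↦ ∫ s in Iic t, f i s) = volume.restrict (Ioo 0 1) := fun i ↦
    map_setIntegral_Iic_withDensity_ofReal (hf i) (hf_pos i) (hf_one i)
  have : ∀ i, SigmaFinite ((volume.withDensity fun t ↦ ENNReal.ofReal (f i t)).map
      (fun t ↦ ∫ s in Iic t, f i s)) := fun i ↦ by
    rw [hmap i]; infer_instance
  rw [Measure.pi_map_pi fun i ↦
      (strictMono_setIntegral_Iic (hf i) (hf_pos i)).monotone.measurable.aemeasurable,
    funext hmap, volume_pi, Measure.restrict_pi_pi]

theorem volume_withDensity_ofReal_prod (hf : ∀ i, AEMeasurable (f i)) (hf_nonneg : ∀ i, 0 ≤ f i) :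
    volume.withDensity (fun x : ι → ℝ ↦ ENNReal.ofReal (∏ i, f i (x i))) =
      Measure.pi fun i ↦ volume.withDensity fun t ↦ ENNReal.ofReal (f i t) := by
  rw [Measure.pi_withDensity fun i ↦ (hf i).ennreal_ofReal, volume_pi]
  congr with x
  rw [ENNReal.ofReal_prod_of_nonneg fun i _ ↦ hf_nonneg i (x i)]

theorem integral_prod_mul_comp_setIntegral_Iic (hf : ∀ i, Integrable (f i))
    (hf_pos : ∀ i t, 0 < f i t) (hf_one : ∀ i, ∫ t, f i t = 1) {g : (ι → ℝ) → ℝ}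
    (hg : AEStronglyMeasurable g (volume.restrict (Icc 0 1))) :
    ∫ x : ι → ℝ, (∏ i, f i (x i)) * g (fun i ↦ ∫ s in Iic (x i), f i s) =
      ∫ u in Icc 0 1, g u := by
  have hf_nonneg : ∀ i, 0 ≤ f i := fun i t ↦ (hf_pos i t).le
  have hprod_meas : AEMeasurable fun x : ι → ℝ ↦ ∏ i, f i (x i) := by
    rw [volume_pi]
    exact Finset.aemeasurable_fun_prod _ fun i _ ↦
      (hf i).aemeasurable.comp_quasiMeasurePreserving (Measure.quasiMeasurePreserving_eval _ i)
  have hT : Measurable fun (x : ι → ℝ) i ↦ ∫ s in Iic (x i), f i s :=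
    measurable_pi_lambda _ fun i ↦
      (strictMono_setIntegral_Iic (hf i) (hf_pos i)).monotone.measurable.comp
        (measurable_pi_apply i)
  have hmap := map_pi_setIntegral_Iic_withDensity_ofReal hf hf_pos hf_one
  calc ∫ x : ι → ℝ, (∏ i, f i (x i)) * g (fun i ↦ ∫ s in Iic (x i), f i s)
      = ∫ x : ι → ℝ, g (fun i ↦ ∫ s in Iic (x i), f i s)
          ∂volume.withDensity fun x : ι → ℝ ↦ ENNReal.ofReal (∏ i, f i (x i)) := by
        rw [integral_withDensity_eq_integral_toReal_smul₀ hprod_meas.ennreal_ofReal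
          (.of_forall fun _ ↦ ENNReal.ofReal_lt_top)]
        congr with x
        rw [ENNReal.toReal_ofReal (Finset.prod_nonneg fun i _ ↦ hf_nonneg i (x i)), smul_eq_mul]
    _ = ∫ u in univ.pi fun _ ↦ Ioo 0 1, g u := by
        have hg' : AEStronglyMeasurable g (volume.restrict (univ.pi fun _ ↦ Ioo 0 1)) :=
          hg.mono_measure (Measure.restrict_mono_ae Measure.univ_pi_Ioo_ae_eq_Icc.le)
        rw [volume_withDensity_ofReal_prod (fun i ↦ (hf i).aemeasurable) hf_nonneg, ← hmap,
          integral_map hT.aemeasurable (hmap ▸ hg')]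
    _ = ∫ u in Icc 0 1, g u := setIntegral_congr_set Measure.univ_pi_Ioo_ae_eq_Icc

end Product

end ProbabilityTheory

theorem mi_eq_neg_copula_entropy_general (N : ℕ)
    (p : (Fin N → ℝ) → ℝ) (c : (Fin N → ℝ) → ℝ)
    (pm : Fin N → ℝ → ℝ) (F : Fin N → ℝ → ℝ)
    (hpm_pos : ∀ i t, 0 < pm i t)
    (hpm1 : ∀ i, ∫ t, pm i t = 1)
    (hF : ∀ i t, F i t = ∫ s in Set.Iic t, pm i s)
    (hcop : ∀ x, p x = c (fun i => F i (x i)) * ∏ i, pm i (x i))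
    (hint2 : IntegrableOn (fun u => c u * Real.log (c u)) (Set.Icc (0 : Fin N → ℝ) 1)) :
    ∫ x, p x * Real.log (p x / ∏ i, pm i (x i)) =
      -(-(∫ u in Set.Icc (0 : Fin N → ℝ) 1, c u * Real.log (c u))) := by
  have hpm_int : ∀ i, Integrable (pm i) := fun i ↦ .of_integral_ne_zero (by simp [hpm1 i])
  have hintegrand : ∀ x, p x * Real.log (p x / ∏ i, pm i (x i)) =
      (∏ i, pm i (x i)) * (c (fun i ↦ F i (x i)) * Real.log (c (fun i ↦ F i (x i)))) := by
    intro x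
    have hprod : 0 < ∏ i, pm i (x i) := Finset.prod_pos fun i _ ↦ hpm_pos i (x i)
    rw [hcop x, mul_div_cancel_right₀ _ hprod.ne']
    ring
  simp_rw [neg_neg, hintegrand, hF]
  exact integral_prod_mul_comp_setIntegral_Iic hpm_int hpm_pos hpm1
    (g := fun u ↦ c u * Real.log (c u)) hint2.aestronglyMeasurable

/-- Mutual information equals negative copula entropy. -/
theorem mi_eq_neg_copula_entropy (N : ℕ)
    (p : (Fin N → ℝ) → ℝ) (c : (Fin N → ℝ) → ℝ)
    (pm : Fin N → ℝ → ℝ) (F : Fin N → ℝ → ℝ)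
    (hp_pos : ∀ x, 0 < p x)
    (hpm_pos : ∀ i t, 0 < pm i t)
    (hp1 : ∫ x, p x = 1)
    (hpm1 : ∀ i, ∫ t, pm i t = 1)
    (hF : ∀ i t, F i t = ∫ s in Set.Iic t, pm i s)
    (hcop : ∀ x, p x = c (fun i => F i (x i)) * ∏ i, pm i (x i))
    (hint1 : Integrable fun x => p x * Real.log (p x / ∏ i, pm i (x i)))
    (hint2 : IntegrableOn (fun u => c u * Real.log (c u)) (Set.Icc (0 : Fin N → ℝ) 1)) :
    ∫ x, p x * Real.log (p x / ∏ i, pm i (x i)) =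
      -(-(∫ u in Set.Icc (0 : Fin N → ℝ) 1, c u * Real.log (c u))) :=
  mi_eq_neg_copula_entropy_general N p c pm F hpm_pos hpm1 hF hcop hint2
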